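/- arXiv:1905.09057 — 2 statements merged into one kernel-verified Lean document; each statement's English description precedes it below -/
import Mathlib

section
/- Let ω be a finitely additive nonnegative set function on subsets of a set I, let I' ⊆ I, and suppose a finite collection {J} of disjoint subsets of I includes a distinguished J' = I' with ω(I')·|I| > 16·ω(I)·|I'| where |·| is another nonnegative additive set function with |I| > 0, ω(I) > 0. Suppose ω(J) ≥ c·ω(I) for every J in the collection, with 0 < c ≤ 1, and ∑_J ω(J) ≤ ω(I), ∑_{J ≠ I'} |J| ≤ |I|. Then ∑_J ω(J)^{1/2}|J|^{1/2} ≤ (1 - c/4)·ω(I)^{1/2}|I|^{1/2}. -/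
open Finset

theorem cauchy_schwarz_contraction {ι : Type*} [DecidableEq ι]
    (s : Finset ι) (j' : ι) (hj' : j' ∈ s)
    (ω v : ι → ℝ) (ωI vI c : ℝ)
    (hωnn : ∀ j ∈ s, 0 ≤ ω j) (hvnn : ∀ j ∈ s, 0 ≤ v j)
    (hωI : 0 < ωI) (hvI : 0 < vI)
    (hc0 : 0 < c) (hc1 : c ≤ 1)
    (hHD : ω j' * vI > 16 * ωI * v j')
    (hlb : ∀ j ∈ s, c * ωI ≤ ω j)
    (hωsum : ∑ j ∈ s, ω j ≤ ωI)
    (hvsum : ∑ j ∈ s.erase j', v j ≤ vI) :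
    ∑ j ∈ s, Real.sqrt (ω j) * Real.sqrt (v j) ≤
      (1 - c / 4) * (Real.sqrt ωI * Real.sqrt vI) := by
  have key : ∀ x y : ℝ, 0 ≤ y → x ^ 2 ≤ y ^ 2 → x ≤ y := by
    intro x y hy h; nlinarith [sq_nonneg (x - y), sq_nonneg (x + y)]
  have hsplit : ∀ f : ι → ℝ,
      ∑ j ∈ s, f j = f j' + ∑ j ∈ s.erase j', f j := by
    intro f
    rw [← Finset.sum_insert (Finset.notMem_erase j' s), Finset.insert_erase hj']
  have hωj' : 0 ≤ ω j' := hωnn j' hj'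
  have hvj' : 0 ≤ v j' := hvnn j' hj'
  have hω' : ∑ j ∈ s.erase j', ω j ≤ ωI - ω j' := by
    have := hωsum; rw [hsplit ω] at this; linarith
  have hω'nn : 0 ≤ ∑ j ∈ s.erase j', ω j :=
    Finset.sum_nonneg fun j hj => hωnn j (Finset.mem_of_mem_erase hj)
  have hv'nn : 0 ≤ ∑ j ∈ s.erase j', v j :=
    Finset.sum_nonneg fun j hj => hvnn j (Finset.mem_of_mem_erase hj)
  have hωj'le : ω j' ≤ ωI := by linarith
  set a := Real.sqrt ωI with ha
  set b := Real.sqrt vI with hb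
  have ha0 : 0 < a := Real.sqrt_pos.mpr hωI
  have hb0 : 0 < b := Real.sqrt_pos.mpr hvI
  have ha2 : a ^ 2 = ωI := Real.sq_sqrt hωI.le
  have hb2 : b ^ 2 = vI := Real.sq_sqrt hvI.le
  -- Cauchy–Schwarz on the remaining children
  have hA : ∑ j ∈ s.erase j', Real.sqrt (ω j) * Real.sqrt (v j) ≤
      Real.sqrt (ωI - ω j') * b := by
    have hcs := Real.sum_mul_le_sqrt_mul_sqrt (s.erase j')
      (fun j => Real.sqrt (ω j)) (fun j => Real.sqrt (v j))
    have e1 : ∑ j ∈ s.erase j', Real.sqrt (ω j) ^ 2 = ∑ j ∈ s.erase j', ω j :=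
      Finset.sum_congr rfl fun j hj =>
        Real.sq_sqrt (hωnn j (Finset.mem_of_mem_erase hj))
    have e2 : ∑ j ∈ s.erase j', Real.sqrt (v j) ^ 2 = ∑ j ∈ s.erase j', v j :=
      Finset.sum_congr rfl fun j hj =>
        Real.sq_sqrt (hvnn j (Finset.mem_of_mem_erase hj))
    rw [e1, e2] at hcs
    refine hcs.trans ?_
    exact mul_le_mul (Real.sqrt_le_sqrt hω') (Real.sqrt_le_sqrt hvsum)
      (Real.sqrt_nonneg _) (Real.sqrt_nonneg _)
  -- bound on the high-density child
  have hB : Real.sqrt (ω j') * Real.sqrt (v j') ≤ ω j' * b / (4 * a) := by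
    apply key
    · positivity
    · have h1 : Real.sqrt (ω j') ^ 2 = ω j' := Real.sq_sqrt hωj'
      have h2 : Real.sqrt (v j') ^ 2 = v j' := Real.sq_sqrt hvj'
      have : (Real.sqrt (ω j') * Real.sqrt (v j')) ^ 2 = ω j' * v j' := by
        rw [mul_pow, h1, h2]
      rw [this, div_pow, mul_pow, mul_pow, hb2, ha2, le_div_iff₀ (by positivity)]
      nlinarith [mul_le_mul_of_nonneg_left hHD.le hωj']
  -- elementary bound √(ωI - t) ≤ a - t/(2a)
  have hC : Real.sqrt (ωI - ω j') ≤ a - ω j' / (2 * a) := by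
    apply key
    · rw [sub_nonneg, div_le_iff₀ (by positivity)]
      nlinarith
    · have : Real.sqrt (ωI - ω j') ^ 2 = ωI - ω j' :=
        Real.sq_sqrt (by linarith)
      rw [this]
      have h4 : (ω j' / (2 * a)) ^ 2 = ω j' ^ 2 / (4 * ωI) := by
        rw [div_pow, mul_pow, ha2]; norm_num
      have hx : (a - ω j' / (2 * a)) ^ 2
          = a ^ 2 - 2 * a * (ω j' / (2 * a)) + (ω j' / (2 * a)) ^ 2 := by ring
      have hy : 2 * a * (ω j' / (2 * a)) = ω j' := by field_simp
      rw [hx, h4, ha2, hy]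
      have : 0 ≤ ω j' ^ 2 / (4 * ωI) := by positivity
      linarith
  -- combine
  have hcω : c * ωI ≤ ω j' := hlb j' hj'
  rw [hsplit (fun j => Real.sqrt (ω j) * Real.sqrt (v j))]
  have : Real.sqrt (ω j') * Real.sqrt (v j') +
      ∑ j ∈ s.erase j', Real.sqrt (ω j) * Real.sqrt (v j)
      ≤ ω j' * b / (4 * a) + (a - ω j' / (2 * a)) * b := by
    have := mul_le_mul_of_nonneg_right hC hb0.le
    linarith [hA.trans this]
  refine this.trans ?_
  have hfinal : ω j' * b / (4 * a) + (a - ω j' / (2 * a)) * b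
      = a * b - (ω j' / (4 * a)) * b := by field_simp; ring
  rw [hfinal]
  have hstep : c * a / 4 ≤ ω j' / (4 * a) := by
    rw [div_le_div_iff₀ (by norm_num) (by positivity)]
    nlinarith
  nlinarith [mul_le_mul_of_nonneg_right hstep hb0.le]
end

section
/- Let FC be a collection of dyadic cubes, and for each Q ∈ FC in generation k(Q) let n(Q) be the number of cubes in FC properly containing Q. Suppose for each Q ∈ FC and each R ∈ BTM with R ⊆ Q we have μ^{k(Q)}(R) < ℓ(R)^d / 2^{n(R) - n(Q)}, and μ^{k(Q)}(Q) = ℓ(Q)^d. Then ∑_{Q ∈ FC} ℓ(Q)^d ≤ ∑_{R ∈ BTM} ∑_{Q ∈ FC, Q ⊇ R} ℓ(R)^d / 2^{n(R) - n(Q)} ≤ 2 ∑_{R ∈ BTM} ℓ(R)^d. -/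
/-!
Each `Q ∈ FC` has mass `w Q` spread over the BTM cubes below it, and each such `R` receives
less than `w R / 2 ^ (n R - n Q)` from it. Exchanging the order of summation, a fixed `R` is
charged once by each of its FC-ancestors with pairwise distinct exponents `n R - n Q`, so the
charges on `R` are bounded by the geometric series `w R * ∑ 2⁻ʲ = 2 * w R`.
-/

open Finset

theorem Finset.sum_one_half_pow_le_two (s : Finset ℕ) : ∑ j ∈ s, (1 / 2 : ℝ) ^ j ≤ 2 :=
  (sum_le_sum_of_subset_of_nonneg s.subset_range_sup_succ fun _ _ _ => by positivity).trans
    (sum_geometric_two_le _)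

theorem Finset.sum_div_two_pow_le_of_injOn {ι : Type*} (s : Finset ι) (f : ι → ℕ)
    (hf : Set.InjOn f s) {c : ℝ} (hc : 0 ≤ c) : ∑ i ∈ s, c / 2 ^ f i ≤ 2 * c :=
  calc ∑ i ∈ s, c / 2 ^ f i = c * ∑ j ∈ s.image f, (1 / 2 : ℝ) ^ j := by
        rw [sum_image hf, mul_sum]
        simp only [div_eq_mul_inv, one_mul, inv_pow]
    _ ≤ c * 2 := mul_le_mul_of_nonneg_left ((s.image f).sum_one_half_pow_le_two) hc
    _ = 2 * c := mul_comm c 2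

theorem frostmann_packing {α : Type*} [PartialOrder α]
    [DecidableRel ((· ≤ ·) : α → α → Prop)]
    (FC BTM : Finset α) (w : α → ℝ) (hw : ∀ a, 0 ≤ w a)
    (n : α → ℕ) (m : α → α → ℝ)
    -- μ^{k(Q)}(Q) = ℓ(Q)^d, and μ^{k(Q)} is carried by the BTM cubes inside Q
    (htot : ∀ Q ∈ FC, w Q ≤ ∑ R ∈ BTM.filter (fun R => R ≤ Q), m Q R)
    -- μ^{k(Q)}(R) < ℓ(R)^d / 2^{n(R)-n(Q)} for R ∈ BTM, R ⊆ Q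
    (hm : ∀ Q ∈ FC, ∀ R ∈ BTM, R ≤ Q → m Q R < w R / 2 ^ (n R - n Q))
    -- distinct FC-ancestors of a BTM cube have distinct n-values
    (hinj : ∀ R ∈ BTM, ∀ Q ∈ FC, ∀ Q' ∈ FC, R ≤ Q → R ≤ Q' → n Q = n Q' → Q = Q')
    -- and each such ancestor Q satisfies n(Q) < n(R)
    (hlt : ∀ R ∈ BTM, ∀ Q ∈ FC, R ≤ Q → n Q < n R) :
    (∑ Q ∈ FC, w Q ≤
        ∑ R ∈ BTM, ∑ Q ∈ FC.filter (fun Q => R ≤ Q), w R / 2 ^ (n R - n Q)) ∧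
      (∑ R ∈ BTM, ∑ Q ∈ FC.filter (fun Q => R ≤ Q), w R / 2 ^ (n R - n Q) ≤
        2 * ∑ R ∈ BTM, w R) := by
  refine ⟨?_, ?_⟩
  · calc ∑ Q ∈ FC, w Q ≤ ∑ Q ∈ FC, ∑ R ∈ BTM.filter (· ≤ Q), m Q R := sum_le_sum htot
      _ ≤ ∑ Q ∈ FC, ∑ R ∈ BTM.filter (· ≤ Q), w R / 2 ^ (n R - n Q) := by
          gcongr with Q hQ R hR
          exact (hm Q hQ R (mem_filter.1 hR).1 (mem_filter.1 hR).2).le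
      _ = _ := sum_comm' fun Q R => by simp only [mem_filter]; tauto
  · rw [mul_sum]
    refine sum_le_sum fun R hR => sum_div_two_pow_le_of_injOn _ _ ?_ (hw R)
    intro Q hQ Q' hQ' hgap
    simp only [coe_filter, Set.mem_ofPred_eq] at hQ hQ' hgap
    -- `n R - n Q` is truncated subtraction; `hlt` keeps it injective in `n Q`.
    have := hlt R hR Q hQ.1 hQ.2
    have := hlt R hR Q' hQ'.1 hQ'.2
    exact hinj R hR Q hQ.1 Q' hQ'.1 hQ.2 hQ'.2 (by omega)
end
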